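/- Let a be an n×n complex upper triangular matrix and let E(a) denote its diagonal part. Then the eigenvalues of |a| log-majorize those of |E(a)|: for every k ∈ {1,…,n}, ∏_{i=1}^k s_i(E(a)) ≤ ∏_{i=1}^k s_i(a), and |det E(a)| ≤ |det a|, where s_i denotes decreasingly ordered singular values. -/

import Mathlib

open Matrix
open scoped ComplexOrder

/-- The absolute value `|x| = (xᴴ x)^(1/2)` of a complex matrix. -/
noncomputable def matAbs {m : Type*} [Fintype m] [DecidableEq m] (x : Matrix m m ℂ) : Matrix m m ℂ :=
  ((Matrix.posSemidef_conjTranspose_mul_self x).1.eigenvectorUnitary : Matrix m m ℂ) *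
    diagonal ((↑) ∘ (√·) ∘ (Matrix.posSemidef_conjTranspose_mul_self x).1.eigenvalues) *
    (star (Matrix.posSemidef_conjTranspose_mul_self x).1.eigenvectorUnitary : Matrix m m ℂ)

theorem matAbs_herm {m : Type*} [Fintype m] [DecidableEq m] (x : Matrix m m ℂ) :
    (matAbs x).IsHermitian := by
  unfold matAbs Matrix.IsHermitian
  simp [Matrix.conjTranspose_mul, Matrix.diagonal_conjTranspose, mul_assoc,
    Matrix.star_eq_conjTranspose, Pi.star_def, Complex.conj_ofReal, Function.comp_def]

/-- Functional calculus for a Hermitian matrix: apply `f : ℝ → ℝ` to the eigenvalues. -/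
noncomputable def herCFC {m : Type*} [Fintype m] [DecidableEq m] (x : Matrix m m ℂ)
    (hx : x.IsHermitian) (f : ℝ → ℝ) : Matrix m m ℂ :=
  (hx.eigenvectorUnitary : Matrix m m ℂ) *
    Matrix.diagonal (fun i => (f (hx.eigenvalues i) : ℂ)) *
    star (hx.eigenvectorUnitary : Matrix m m ℂ)

theorem herCFC_herm {m : Type*} [Fintype m] [DecidableEq m] (x : Matrix m m ℂ)
    (hx : x.IsHermitian) (f : ℝ → ℝ) : (herCFC x hx f).IsHermitian := by
  unfold herCFC Matrix.IsHermitian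
  simp [Matrix.conjTranspose_mul, Matrix.diagonal_conjTranspose, mul_assoc,
    Matrix.star_eq_conjTranspose, Pi.star_def, Complex.conj_ofReal]

/-- The power `|x|^p` of the absolute value of a matrix, via functional calculus. -/
noncomputable def matAbsPow {m : Type*} [Fintype m] [DecidableEq m] (x : Matrix m m ℂ) (p : ℝ) :
    Matrix m m ℂ :=
  herCFC (matAbs x) (matAbs_herm x) (fun t => t ^ p)

theorem matAbsPow_herm {m : Type*} [Fintype m] [DecidableEq m] (x : Matrix m m ℂ) (p : ℝ) :
    (matAbsPow x p).IsHermitian :=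
  herCFC_herm _ _ _

/-- Rearrangement of a tuple of reals in decreasing order. -/
noncomputable def sortDesc {n : ℕ} (f : Fin n → ℝ) : Fin n → ℝ :=
  fun i => f (Tuple.sort f i.rev)

/-- Decreasingly ordered eigenvalues of a Hermitian matrix. -/
noncomputable def eigsDesc {n : ℕ} {x : Matrix (Fin n) (Fin n) ℂ} (hx : x.IsHermitian) :
    Fin n → ℝ :=
  sortDesc hx.eigenvalues

/-- Decreasingly ordered singular values of a complex matrix. -/
noncomputable def svalsDesc {n : ℕ} (x : Matrix (Fin n) (Fin n) ℂ) : Fin n → ℝ :=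
  eigsDesc (matAbs_herm x)

/-! Let `g₁ < ⋯ < g_k` be the positions of the `k` diagonal entries of largest modulus. The
principal submatrix `a[g,g]` is again upper triangular, so `∏ᵢ |a_{gᵢgᵢ}| = |det a[g,g]|`, and it
suffices to bound every `k × k` minor `a[f,g]` by `s₁(a) ⋯ s_k(a)`. By Cauchy–Binet,
`|det a[f,g]|² ≤ det (a[:,g]ᴴ a[:,g])`. Writing `|a| = U D Uᴴ` gives `aᴴa = (D Uᴴ)ᴴ (D Uᴴ)`, and
Cauchy–Binet expands this Gram determinant as the sum of the squared `k × k` minors of the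
isometry `Uᴴ[:,g]` (which sum to `1`), each weighted by a product of `k` distinct singular values,
hence by at most `(s₁(a) ⋯ s_k(a))²`. -/

open Finset Function

section Tuples

variable {k n : ℕ}

theorem StrictMono.val_le_val {g : Fin k → Fin n} (hg : StrictMono g) (j : Fin k) :
    (j : ℕ) ≤ g j := by
  simpa using card_le_card_of_injOn (s := Iio j) (t := Iio (g j)) g
    (fun i hi => by simpa using hg (by simpa using hi)) hg.injective.injOn

theorem Function.Injective.strictMono_comp_sort {α : Type*} [LinearOrder α] {p : Fin k → α}
    (hp : p.Injective) : StrictMono (p ∘ Tuple.sort p) :=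
  (Tuple.monotone_sort p).strictMono_of_injective (hp.comp (Tuple.sort p).injective)

theorem Tuple.sort_strictMono_comp {α : Type*} [LinearOrder α] {g : Fin k → α}
    (hg : StrictMono g) (τ : Equiv.Perm (Fin k)) : Tuple.sort (g ∘ τ) = τ⁻¹ := by
  have h := Tuple.comp_perm_comp_sort_eq_comp_sort (f := g) (σ := τ)
  rw [Tuple.sort_eq_refl_iff_monotone.mpr hg.monotone] at h
  exact eq_inv_of_mul_eq_one_right (Equiv.ext fun i => hg.injective (congrFun h i))

theorem Finset.sum_injective_eq_sum_strictMono_sum_perm {α β : Type*} [LinearOrder α]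
    [Fintype α] [AddCommMonoid β] (F : (Fin k → α) → β) :
    ∑ p ∈ univ.filter Injective, F p =
      ∑ g ∈ univ.filter StrictMono, ∑ τ : Equiv.Perm (Fin k), F (g ∘ τ) := by
  rw [← sum_product']
  refine sum_nbij' (fun p => (p ∘ Tuple.sort p, (Tuple.sort p)⁻¹)) (fun x => x.1 ∘ x.2)
    (fun p hp => ?_) (fun x hx => ?_) (fun p _ => ?_) (fun x hx => ?_) (fun p _ => ?_)
    <;> simp only [mem_filter, mem_product, mem_univ, true_and, and_true] at *
  · exact hp.strictMono_comp_sort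
  · exact hx.injective.comp x.2.injective
  · ext i; simp
  · simp [Tuple.sort_strictMono_comp hx, comp_assoc]
  · simp [comp_assoc]

theorem Fin.prod_filter_val_lt {M : Type*} [CommMonoid M] (hk : k ≤ n) (f : Fin n → M) :
    ∏ i ∈ univ.filter (fun i : Fin n => (i : ℕ) < k), f i = ∏ j : Fin k, f (Fin.castLE hk j) := by
  have : univ.filter (fun i : Fin n => (i : ℕ) < k) = univ.map (Fin.castLEEmb hk) := by
    ext i
    simp only [mem_filter, mem_univ, true_and, mem_map, castLEEmb_apply]
    exact ⟨fun h => ⟨⟨i, h⟩, rfl⟩, fun ⟨j, hj⟩ => hj ▸ j.2⟩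
  rw [this, prod_map]
  rfl

end Tuples

section CauchyBinet

variable {R : Type*} [CommRing R] {k n : ℕ}

theorem Matrix.det_mul_eq_sum_det_submatrix (M : Matrix (Fin k) (Fin n) R)
    (N : Matrix (Fin n) (Fin k) R) :
    det (M * N) = ∑ p : Fin k → Fin n, det (M.submatrix id p) * ∏ i, N (p i) i := by
  simp only [det_apply', mul_apply, prod_univ_sum, Fintype.piFinset_univ, mul_sum, sum_mul,
    prod_mul_distrib, submatrix_apply, id]
  rw [sum_comm]
  simp only [mul_assoc]

theorem Matrix.det_mul_eq_sum_strictMono (M : Matrix (Fin k) (Fin n) R)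
    (N : Matrix (Fin n) (Fin k) R) :
    det (M * N) = ∑ g ∈ univ.filter StrictMono,
      det (M.submatrix id g) * det (N.submatrix g id) := by
  have repeated_column {p : Fin k → Fin n} (hp : ¬ p.Injective) : det (M.submatrix id p) = 0 := by
    obtain ⟨i, j, hij, hne⟩ : ∃ i j, p i = p j ∧ i ≠ j := by simpa [Injective] using hp
    exact det_zero_of_column_eq hne fun r => by simp [hij]
  rw [det_mul_eq_sum_det_submatrix, ← sum_filter_of_ne fun p _ h =>
      not_not.mp (mt repeated_column (left_ne_zero_of_mul h)),
    sum_injective_eq_sum_strictMono_sum_perm]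
  refine sum_congr rfl fun g _ => ?_
  simp only [det_apply' (N.submatrix g id), mul_sum]
  refine sum_congr rfl fun τ _ => ?_
  rw [show M.submatrix id (g ∘ τ) = (M.submatrix id g).submatrix id τ from rfl, det_permute',
    mul_left_comm, ← mul_assoc]
  rfl

end CauchyBinet

section SortDesc

variable {n : ℕ}

theorem sortDesc_eq_comp (f : Fin n → ℝ) :
    sortDesc f = f ∘ Fin.revPerm.trans (Tuple.sort f) := rfl

theorem sortDesc_antitone (f : Fin n → ℝ) : Antitone (sortDesc f) :=
  fun _ _ hij => Tuple.monotone_sort f (Fin.rev_le_rev.mpr hij)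

theorem sortDesc_eq_of_map_eq {f g : Fin n → ℝ} (h : univ.val.map f = univ.val.map g) :
    sortDesc f = sortDesc g := by
  have hperm : (List.ofFn (f ∘ Tuple.sort f)).Perm (List.ofFn (g ∘ Tuple.sort g)) := by
    refine ((Tuple.sort f).ofFn_comp_perm f).trans
      (List.Perm.trans ?_ ((Tuple.sort g).ofFn_comp_perm g).symm)
    rw [← Multiset.coe_eq_coe, ← Fin.univ_val_map, ← Fin.univ_val_map, h]
  have hsorted := List.ofFn_injective <| hperm.eq_of_sortedLE
    (Tuple.monotone_sort f).sortedLE_ofFn (Tuple.monotone_sort g).sortedLE_ofFn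
  ext i
  exact congrFun hsorted i.rev

theorem prod_le_prod_sortDesc {k : ℕ} (hk : k ≤ n) {f : Fin n → ℝ} (hf : 0 ≤ f)
    {u : Fin k → Fin n} (hu : Injective u) :
    ∏ j, f (u j) ≤ ∏ i ∈ univ.filter (fun i : Fin n => (i : ℕ) < k), sortDesc f i := by
  set v := (Fin.revPerm.trans (Tuple.sort f)).symm ∘ u
  have hv : Injective v := (Equiv.injective _).comp hu
  calc ∏ j, f (u j) = ∏ j, sortDesc f (v j) := by simp [sortDesc_eq_comp, v]
    _ = ∏ j, sortDesc f ((v ∘ Tuple.sort v) j) := (Equiv.prod_comp (Tuple.sort v) _).symm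
    _ ≤ ∏ j, sortDesc f (Fin.castLE hk j) :=
        prod_le_prod (fun _ _ => hf _) fun j _ =>
          sortDesc_antitone f (Fin.le_def.mpr (hv.strictMono_comp_sort.val_le_val j))
    _ = _ := (Fin.prod_filter_val_lt hk _).symm

theorem exists_strictMono_prod_eq_prod_sortDesc {k : ℕ} (hk : k ≤ n) (f : Fin n → ℝ) :
    ∃ g : Fin k → Fin n, StrictMono g ∧
      ∏ j, f (g j) = ∏ i ∈ univ.filter (fun i : Fin n => (i : ℕ) < k), sortDesc f i := by
  set u := Fin.revPerm.trans (Tuple.sort f) ∘ Fin.castLE hk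
  have hu : Injective u := (Equiv.injective _).comp (Fin.castLE_injective hk)
  refine ⟨u ∘ Tuple.sort u, hu.strictMono_comp_sort, ?_⟩
  rw [Fin.prod_filter_val_lt hk]
  exact Equiv.prod_comp (Tuple.sort u) (fun j => f (u j))

end SortDesc

section Gram

variable {𝕜 : Type*} [RCLike 𝕜] {k n : ℕ}

theorem Matrix.conjTranspose_mul_self_submatrix {l m n : Type*} [Fintype m]
    (X : Matrix m n 𝕜) (g : l → n) :
    (X.submatrix id g)ᴴ * X.submatrix id g = (Xᴴ * X).submatrix g g := by
  rw [conjTranspose_submatrix, submatrix_mul _ _ _ _ _ bijective_id]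

theorem Matrix.det_conjTranspose_mul_self_eq_sum (C : Matrix (Fin n) (Fin k) 𝕜) :
    det (Cᴴ * C) = ((∑ g ∈ univ.filter StrictMono, ‖det (C.submatrix g id)‖ ^ 2 : ℝ) : 𝕜) := by
  rw [det_mul_eq_sum_strictMono]
  push_cast
  refine sum_congr rfl fun g _ => ?_
  rw [← conjTranspose_submatrix, det_conjTranspose, RCLike.star_def, RCLike.conj_mul]

theorem Matrix.norm_det_conjTranspose_mul_self (C : Matrix (Fin n) (Fin k) 𝕜) :
    ‖det (Cᴴ * C)‖ = ∑ g ∈ univ.filter StrictMono, ‖det (C.submatrix g id)‖ ^ 2 := by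
  rw [det_conjTranspose_mul_self_eq_sum, RCLike.norm_ofReal,
    abs_of_nonneg (sum_nonneg fun _ _ => sq_nonneg _)]

theorem Matrix.norm_det_submatrix_sq_le (C : Matrix (Fin n) (Fin k) 𝕜) {f : Fin k → Fin n}
    (hf : StrictMono f) : ‖det (C.submatrix f id)‖ ^ 2 ≤ ‖det (Cᴴ * C)‖ := by
  rw [norm_det_conjTranspose_mul_self]
  exact single_le_sum (f := fun g => ‖det (C.submatrix g id)‖ ^ 2) (fun _ _ => sq_nonneg _)
    (mem_filter.mpr ⟨mem_univ _, hf⟩)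

theorem Matrix.norm_det_conjTranspose_mul_self_diagonal_mul_le (hk : k ≤ n) {d : Fin n → ℝ} (hd : 0 ≤ d)
    (Z : Matrix (Fin n) (Fin k) 𝕜) :
    ‖det ((diagonal (fun i => (d i : 𝕜)) * Z)ᴴ * (diagonal (fun i => (d i : 𝕜)) * Z))‖ ≤
      (∏ i ∈ univ.filter (fun i : Fin n => (i : ℕ) < k), sortDesc d i) ^ 2 *
        ‖det (Zᴴ * Z)‖ := by
  rw [norm_det_conjTranspose_mul_self, norm_det_conjTranspose_mul_self, mul_sum]
  refine sum_le_sum fun g hg => ?_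
  have hrows : (diagonal (fun i => (d i : 𝕜)) * Z).submatrix g id =
      diagonal (fun j => (d (g j) : 𝕜)) * Z.submatrix g id := by
    ext; simp [diagonal_mul]
  have hprod : ∏ j, d (g j) ≤ ∏ i ∈ univ.filter (fun i : Fin n => (i : ℕ) < k), sortDesc d i :=
    prod_le_prod_sortDesc hk hd (mem_filter.mp hg).2.injective
  rw [hrows, det_mul, det_diagonal, norm_mul, mul_pow, ← RCLike.ofReal_prod, RCLike.norm_ofReal,
    abs_of_nonneg (prod_nonneg fun j _ => hd (g j))]
  gcongr
  exact prod_nonneg fun j _ => hd (g j)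

end Gram

section MatAbs

variable {m : Type*} [Fintype m] [DecidableEq m]

theorem Matrix.IsHermitian.map_eigenvalues_eq {𝕜 : Type*} [RCLike 𝕜] {A : Matrix m m 𝕜}
    (hA : A.IsHermitian) (U : unitaryGroup m 𝕜) {d : m → ℝ}
    (h : A = (U : Matrix m m 𝕜) * diagonal (fun i => (d i : 𝕜)) * star (U : Matrix m m 𝕜)) :
    univ.val.map hA.eigenvalues = univ.val.map d := by
  have hchar : A.charpoly = ∏ i, (Polynomial.X - Polynomial.C (d i : 𝕜)) := by
    rw [h, charpoly_mul_comm, ← mul_assoc, Unitary.star_mul_self_of_mem U.2, one_mul,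
      charpoly_diagonal]
  have hroots := hA.roots_charpoly_eq_eigenvalues
  rw [hchar, Polynomial.roots_prod _ _ (by simp [prod_ne_zero_iff, Polynomial.X_sub_C_ne_zero])]
    at hroots
  refine Multiset.map_injective (RCLike.ofReal_injective (K := 𝕜)) ?_
  simpa [Multiset.map_map] using hroots.symm

theorem Matrix.IsHermitian.mul_self_eq_conjTranspose_mul_self {𝕜 : Type*} [RCLike 𝕜]
    {B : Matrix m m 𝕜} (hB : B.IsHermitian) :
    B * B = (diagonal (fun i => (hB.eigenvalues i : 𝕜)) *
        star (hB.eigenvectorUnitary : Matrix m m 𝕜))ᴴ *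
      (diagonal (fun i => (hB.eigenvalues i : 𝕜)) * star (hB.eigenvectorUnitary : Matrix m m 𝕜)) := by
  conv_lhs => rw [hB.spectral_theorem, ← map_mul, Unitary.conjStarAlgAut_apply]
  simp only [star_eq_conjTranspose, conjTranspose_mul, conjTranspose_conjTranspose,
    diagonal_conjTranspose, Pi.star_def, RCLike.star_def, RCLike.conj_ofReal, mul_assoc,
    Function.comp_def]

theorem matAbs_mul_self (x : Matrix m m ℂ) : matAbs x * matAbs x = xᴴ * x := by
  have hx := posSemidef_conjTranspose_mul_self x
  conv_rhs => rw [hx.1.spectral_theorem]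
  rw [matAbs, ← Unitary.conjStarAlgAut_apply (S := ℂ), ← map_mul, diagonal_mul_diagonal]
  congr 2
  ext i
  simp [← Complex.ofReal_mul, Real.mul_self_sqrt (hx.eigenvalues_nonneg i)]

theorem map_eigenvalues_matAbs (x : Matrix m m ℂ) :
    univ.val.map (matAbs_herm x).eigenvalues =
      univ.val.map fun i => √((posSemidef_conjTranspose_mul_self x).1.eigenvalues i) :=
  (matAbs_herm x).map_eigenvalues_eq _ rfl

theorem eigenvalues_matAbs_nonneg (x : Matrix m m ℂ) : 0 ≤ (matAbs_herm x).eigenvalues := by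
  intro i
  have hi := map_eigenvalues_matAbs x ▸
    Multiset.mem_map_of_mem (matAbs_herm x).eigenvalues (mem_univ i)
  obtain ⟨j, -, hj⟩ := Multiset.mem_map.mp hi
  exact hj ▸ Real.sqrt_nonneg _

end MatAbs

theorem svalsDesc_diagonal {n : ℕ} (v : Fin n → ℂ) :
    svalsDesc (diagonal v) = sortDesc fun i => ‖v i‖ := by
  have hgram : (diagonal v)ᴴ * diagonal v =
      (1 : unitaryGroup (Fin n) ℂ) * diagonal (fun i => ((‖v i‖ ^ 2 : ℝ) : ℂ)) * star 1 := by
    simp [diagonal_conjTranspose, Complex.conj_mul']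
  have h := congrArg (Multiset.map Real.sqrt)
    ((posSemidef_conjTranspose_mul_self _).1.map_eigenvalues_eq 1 hgram)
  rw [Multiset.map_map, Multiset.map_map] at h
  refine sortDesc_eq_of_map_eq ((map_eigenvalues_matAbs _).trans ?_)
  have hsqrt : (fun i => ‖v i‖) = Real.sqrt ∘ fun i => ‖v i‖ ^ 2 :=
    funext fun i => (Real.sqrt_sq (norm_nonneg (v i))).symm
  rw [hsqrt]
  exact h

theorem norm_det_submatrix_le_prod_svalsDesc {k n : ℕ} (hk : k ≤ n)
    (a : Matrix (Fin n) (Fin n) ℂ) {f g : Fin k → Fin n} (hf : StrictMono f) (hg : Injective g) :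
    ‖det (a.submatrix f g)‖ ≤ ∏ i ∈ univ.filter (fun i : Fin n => (i : ℕ) < k), svalsDesc a i := by
  set hA := matAbs_herm a
  set U : Matrix (Fin n) (Fin n) ℂ := ↑hA.eigenvectorUnitary
  set D : Matrix (Fin n) (Fin n) ℂ := diagonal fun i => (hA.eigenvalues i : ℂ)
  set Z := (star U).submatrix id g
  have hZ : Zᴴ * Z = 1 := by
    rw [conjTranspose_mul_self_submatrix, star_eq_conjTranspose, conjTranspose_conjTranspose,
      ← star_eq_conjTranspose, Unitary.mul_star_self_of_mem hA.eigenvectorUnitary.2,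
      submatrix_one g hg]
  have hgram : (a.submatrix id g)ᴴ * a.submatrix id g = (D * Z)ᴴ * (D * Z) := by
    rw [conjTranspose_mul_self_submatrix, ← matAbs_mul_self, hA.mul_self_eq_conjTranspose_mul_self,
      ← conjTranspose_mul_self_submatrix]
    rfl
  have hP : 0 ≤ ∏ i ∈ univ.filter (fun i : Fin n => (i : ℕ) < k), svalsDesc a i :=
    prod_nonneg fun i _ => eigenvalues_matAbs_nonneg a _
  refine (pow_le_pow_iff_left₀ (norm_nonneg _) hP two_ne_zero).mp ?_
  calc ‖det (a.submatrix f g)‖ ^ 2 = ‖det ((a.submatrix id g).submatrix f id)‖ ^ 2 := rfl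
    _ ≤ ‖det ((a.submatrix id g)ᴴ * a.submatrix id g)‖ := norm_det_submatrix_sq_le _ hf
    _ = ‖det ((D * Z)ᴴ * (D * Z))‖ := by rw [hgram]
    _ ≤ (∏ i ∈ univ.filter (fun i : Fin n => (i : ℕ) < k), svalsDesc a i) ^ 2 * ‖det (Zᴴ * Z)‖ :=
        norm_det_conjTranspose_mul_self_diagonal_mul_le hk (eigenvalues_matAbs_nonneg a) Z
    _ = _ := by rw [hZ, det_one, norm_one, mul_one]

/-- **Log-majorization for the diagonal part of an upper triangular matrix.** If `a` is upper
triangular with diagonal part `E(a)`, then `∏_{i<k} sᵢ(E(a)) ≤ ∏_{i<k} sᵢ(a)` for each `k`,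
and `|det E(a)| ≤ |det a|`. -/
theorem svals_diag_log_majorize (n : ℕ) (a : Matrix (Fin n) (Fin n) ℂ)
    (ha : ∀ i j : Fin n, j < i → a i j = 0) :
    (∀ k : ℕ, k ≤ n →
      ∏ i ∈ Finset.univ.filter (fun i : Fin n => (i : ℕ) < k),
          svalsDesc (Matrix.diagonal fun i => a i i) i ≤
        ∏ i ∈ Finset.univ.filter (fun i : Fin n => (i : ℕ) < k), svalsDesc a i) ∧
    ‖(Matrix.diagonal fun i => a i i).det‖ ≤ ‖a.det‖ := by
  have hdet : a.det = ∏ i, a i i := det_of_isUpperTriangular ha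
  refine ⟨fun k hk => ?_, by rw [det_diagonal, hdet]⟩
  obtain ⟨g, hg, hprod⟩ := exists_strictMono_prod_eq_prod_sortDesc hk fun i => ‖a i i‖
  have htri : (a.submatrix g g).IsUpperTriangular := fun _ _ hij => ha _ _ (hg hij)
  calc ∏ i ∈ univ.filter (fun i : Fin n => (i : ℕ) < k), svalsDesc (diagonal fun i => a i i) i
      = ‖det (a.submatrix g g)‖ := by
        rw [svalsDesc_diagonal, ← hprod, det_of_isUpperTriangular htri, norm_prod]
        rfl
    _ ≤ _ := norm_det_submatrix_le_prod_svalsDesc hk a hg hg.injective
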